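/- For fixed x < 0, the reward magnitude |w^{-1}(e^{x/w} − 1)| = w^{-1}(1 − e^{x/w}) is strictly decreasing in w on (0, ∞). -/

import Mathlib

lemma aux_g_mono (x : ℝ) (hx : x < 0) :
    StrictMonoOn (fun t : ℝ => t * (1 - Real.exp (x * t))) (Set.Ioi 0) := by
  have hderiv : ∀ t : ℝ, HasDerivAt (fun t : ℝ => t * (1 - Real.exp (x * t)))
      (1 - Real.exp (x * t) - t * (x * Real.exp (x * t))) t := by
    intro t
    have h1 : HasDerivAt (fun t : ℝ => Real.exp (x * t)) (x * Real.exp (x * t)) t := by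
      have := (Real.hasDerivAt_exp (x * t)).comp t ((hasDerivAt_id t).const_mul x)
      simpa [mul_comm, Function.comp_def] using this
    have h2 : HasDerivAt (fun t : ℝ => 1 - Real.exp (x * t)) (-(x * Real.exp (x * t))) t := by
      simpa [Pi.sub_def] using (hasDerivAt_const t 1).sub h1
    have := (hasDerivAt_id t).mul h2
    simpa [mul_comm, sub_eq_add_neg, mul_assoc, Pi.mul_def] using this
  apply StrictMonoOn.mono (s := Set.Ioi 0)
    (strictMonoOn_of_deriv_pos (convex_Ioi 0)
      (Continuous.continuousOn (by continuity)) ?_) le_rfl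
  intro t ht
  rw [interior_Ioi] at ht
  have ht0 : 0 < t := ht
  rw [(hderiv t).deriv]
  have hu : x * t < 0 := mul_neg_of_neg_of_pos hx ht0
  have key : Real.exp (x * t) * (1 + x * t) < 1 := by
    have h1 : (-(x * t)) + 1 < Real.exp (-(x * t)) :=
      Real.add_one_lt_exp (by linarith)
    have h2 : Real.exp (-(x * t)) = (Real.exp (x * t))⁻¹ := Real.exp_neg _
    have h3 : Real.exp (x * t) * (1 - x * t) < 1 := by
      rw [h2] at h1
      have hp := Real.exp_pos (x * t)
      rw [lt_inv_comm₀ (by linarith) hp] at h1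
      calc Real.exp (x * t) * (1 - x * t) = (1 - x * t) * Real.exp (x * t) := by ring
        _ < (1 - x * t) * (-(x * t) + 1)⁻¹ := by
            exact mul_lt_mul_of_pos_left h1 (by linarith)
        _ = 1 := by
            have hne : (-(x * t) + 1) ≠ 0 := by linarith
            field_simp
            ring
    nlinarith [Real.exp_pos (x * t)]
  nlinarith [Real.exp_pos (x * t)]

theorem reward_magnitude_strictAnti (x : ℝ) (hx : x < 0) :
    StrictAntiOn (fun w : ℝ => w⁻¹ * (1 - Real.exp (x / w))) (Set.Ioi 0) := by
  intro a ha b hb hab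
  have ha0 : (0:ℝ) < a := ha
  have hb0 : (0:ℝ) < b := hb
  have h1 : b⁻¹ < a⁻¹ := by exact inv_strictAnti₀ ha0 hab
  have := aux_g_mono x hx (Set.mem_Ioi.2 (inv_pos.2 hb0)) (Set.mem_Ioi.2 (inv_pos.2 ha0)) h1
  simpa [div_eq_mul_inv, mul_comm] using this
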